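/- Soft-thresholding solves the ℓ₁-penalized proximity problem under a symmetry constraint (Lemma on the inner proximity step): Let p ≥ 1 be an integer, Ξ⁰ = [b⁰, Φ⁰ᵀ]ᵀ ∈ ℝ^{(p+1)×p} with b⁰ ∈ ℝ^p and Φ⁰ ∈ ℝ^{p×p}, let λ_b ∈ ℝ^p have nonnegative entries and Λ_Φ ∈ ℝ^{p×p} have nonnegative entries. Then the unique minimizer of (1/2)‖Ω − Ξ⁰‖_F² + Σ_{j=1}^p (λ_b)_j |b_j| + Σ_{j,k} (Λ_Φ)_{jk} |Φ_{jk}| over all Ω = [b, Φᵀ]ᵀ ∈ ℝ^{(p+1)×p} subject to Φ = Φᵀ is given by b_j = Θ_S(b⁰_j; (λ_b)_j) for each j and Φ_{jk} = Θ_S((Φ⁰_{jk} + Φ⁰_{kj})/2; ((Λ_Φ)_{jk} + (Λ_Φ)_{kj})/2) for each j, k. -/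
import Mathlib


open Matrix
open scoped Classical

noncomputable section

/-- Scalar soft-thresholding operator `Θ_S(a; λ) = sgn(a)·(|a| − λ)₊`. -/
def softThresh (a lam : ℝ) : ℝ := Real.sign a * max (|a| - lam) 0

/-- The objective `(1/2)‖Ω − Ξ⁰‖_F² + Σ_j (λ_b)_j |b_j| + Σ_{j,k} (Λ_Φ)_{jk} |Φ_{jk}|`,
where `Ω = [b, Φᵀ]ᵀ` and `Ξ⁰ = [b⁰, Φ⁰ᵀ]ᵀ` (so that
`‖Ω − Ξ⁰‖_F² = ‖b − b⁰‖₂² + ‖Φ − Φ⁰‖_F²`). -/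
def objA {p : ℕ} (b0 : Fin p → ℝ) (Φ0 : Matrix (Fin p) (Fin p) ℝ)
    (lb : Fin p → ℝ) (LPhi : Matrix (Fin p) (Fin p) ℝ)
    (b : Fin p → ℝ) (Φ : Matrix (Fin p) (Fin p) ℝ) : ℝ :=
  (1 / 2) * ((∑ j, (b j - b0 j) ^ 2) + ∑ j, ∑ k, (Φ j k - Φ0 j k) ^ 2)
    + (∑ j, lb j * |b j|) + ∑ j, ∑ k, LPhi j k * |Φ j k|

/-- The fundamental prox inequality for scalar soft-thresholding:
the objective dominates its value at the soft-threshold point plus a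
quadratic gap (1-strong convexity). -/
lemma prox_key (a lam x : ℝ) (hl : 0 ≤ lam) :
    (1/2)*(softThresh a lam - a)^2 + lam*|softThresh a lam|
      + (1/2)*(x - softThresh a lam)^2
      ≤ (1/2)*(x-a)^2 + lam*|x| := by
  have hx1 := le_abs_self x
  have hx2 := neg_abs_le x
  rcases le_or_gt (|a|) lam with h | h
  · have hs : softThresh a lam = 0 := by
      simp [softThresh, max_eq_right (sub_nonpos.mpr h)]
    rw [hs]
    have key : a * x ≤ lam * |x| := by
      calc a * x ≤ |a * x| := le_abs_self _
        _ = |a| * |x| := abs_mul a x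
        _ ≤ lam * |x| := mul_le_mul_of_nonneg_right h (abs_nonneg x)
    simp only [abs_zero]
    nlinarith [key]
  · rcases le_or_gt 0 a with ha | ha
    · have ha' : lam < a := by rwa [abs_of_nonneg ha] at h
      have hs : softThresh a lam = a - lam := by
        rw [softThresh, abs_of_nonneg ha, Real.sign_of_pos (by linarith),
          max_eq_left (by linarith)]; ring
      rw [hs, abs_of_nonneg (by linarith : (0:ℝ) ≤ a - lam)]
      nlinarith
    · have ha' : lam < -a := by rwa [abs_of_neg ha] at h
      have hs : softThresh a lam = a + lam := by
        rw [softThresh, abs_of_neg ha, Real.sign_of_neg ha,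
          max_eq_left (by linarith)]; ring
      rw [hs, abs_of_nonpos (by linarith : a + lam ≤ 0)]
      nlinarith

/-- **Soft-thresholding solves the ℓ₁-penalized proximity problem under a symmetry
constraint.**  The unique minimizer of the objective over symmetric `Φ` is given by
componentwise soft-thresholding of `b⁰` and of the symmetrized `Φ⁰`. -/
theorem softThresh_prox_symm {p : ℕ} (hp : 1 ≤ p)
    (b0 : Fin p → ℝ) (Φ0 : Matrix (Fin p) (Fin p) ℝ)
    (lb : Fin p → ℝ) (hlb : ∀ j, 0 ≤ lb j)
    (LPhi : Matrix (Fin p) (Fin p) ℝ) (hLPhi : ∀ j k, 0 ≤ LPhi j k)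
    (bh : Fin p → ℝ) (hbh : ∀ j, bh j = softThresh (b0 j) (lb j))
    (Φh : Matrix (Fin p) (Fin p) ℝ)
    (hΦh : ∀ j k, Φh j k =
      softThresh ((Φ0 j k + Φ0 k j) / 2) ((LPhi j k + LPhi k j) / 2)) :
    Φh = Φhᵀ ∧
    (∀ (b : Fin p → ℝ) (Φ : Matrix (Fin p) (Fin p) ℝ), Φ = Φᵀ →
      objA b0 Φ0 lb LPhi bh Φh ≤ objA b0 Φ0 lb LPhi b Φ) ∧
    (∀ (b : Fin p → ℝ) (Φ : Matrix (Fin p) (Fin p) ℝ), Φ = Φᵀ →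
      objA b0 Φ0 lb LPhi b Φ = objA b0 Φ0 lb LPhi bh Φh → b = bh ∧ Φ = Φh) := by
  -- symmetry of Φh
  have hΦhsymm : Φh = Φhᵀ := by
    ext j k
    rw [transpose_apply, hΦh, hΦh]
    congr 1 <;> ring
  -- splitting the objective into per-entry sums
  have objSplit : ∀ (b : Fin p → ℝ) (Φ : Matrix (Fin p) (Fin p) ℝ),
      objA b0 Φ0 lb LPhi b Φ
        = (∑ j, ((1/2)*(b j - b0 j)^2 + lb j * |b j|))
          + ∑ j, ∑ k, ((1/2)*(Φ j k - Φ0 j k)^2 + LPhi j k * |Φ j k|) := by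
    intro b Φ
    simp only [objA, Finset.sum_add_distrib, Finset.mul_sum, mul_add]
    ring
  -- symmetrization identity for the Φ-part of the objective
  have e1 : ∀ (Ψ : Matrix (Fin p) (Fin p) ℝ), Ψ = Ψᵀ →
      (∑ j, ∑ k, ((1/2)*(Ψ j k - Φ0 j k)^2 + LPhi j k * |Ψ j k|))
      = ∑ j, ∑ k, ((1/2)*(Ψ j k - (Φ0 j k + Φ0 k j)/2)^2
          + ((LPhi j k + LPhi k j)/2) * |Ψ j k| + (Φ0 j k - Φ0 k j)^2/8) := by
    intro Ψ hΨ
    have hsym : ∀ j k, Ψ k j = Ψ j k := by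
      intro j k
      conv_lhs => rw [hΨ]
      rfl
    have hc : (∑ j, ∑ k, ((1/2)*(Ψ j k - Φ0 j k)^2 + LPhi j k * |Ψ j k|))
        = ∑ j, ∑ k, ((1/2)*(Ψ k j - Φ0 k j)^2 + LPhi k j * |Ψ k j|) := by
      exact Finset.sum_comm
    have half : (∑ j, ∑ k, ((1/2)*(Ψ j k - Φ0 j k)^2 + LPhi j k * |Ψ j k|))
        = ((∑ j, ∑ k, ((1/2)*(Ψ j k - Φ0 j k)^2 + LPhi j k * |Ψ j k|))
          + ∑ j, ∑ k, ((1/2)*(Ψ k j - Φ0 k j)^2 + LPhi k j * |Ψ k j|)) / 2 := by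
      rw [← hc]; ring
    rw [half, ← Finset.sum_add_distrib, Finset.sum_div]
    apply Finset.sum_congr rfl
    intro j _
    rw [← Finset.sum_add_distrib, Finset.sum_div]
    apply Finset.sum_congr rfl
    intro k _
    rw [hsym j k]
    ring
  -- the master inequality
  have key : ∀ (b : Fin p → ℝ) (Φ : Matrix (Fin p) (Fin p) ℝ), Φ = Φᵀ →
      objA b0 Φ0 lb LPhi bh Φh
        + ((1/2)*(∑ j, (b j - bh j)^2) + (1/2)*(∑ j, ∑ k, (Φ j k - Φh j k)^2))
        ≤ objA b0 Φ0 lb LPhi b Φ := by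
    intro b Φ hΦ
    rw [objSplit, objSplit]
    have hB : (∑ j, ((1/2)*(bh j - b0 j)^2 + lb j * |bh j|))
        + (1/2)*(∑ j, (b j - bh j)^2)
        ≤ ∑ j, ((1/2)*(b j - b0 j)^2 + lb j * |b j|) := by
      rw [Finset.mul_sum, ← Finset.sum_add_distrib]
      apply Finset.sum_le_sum
      intro j _
      rw [hbh j]
      exact prox_key (b0 j) (lb j) (b j) (hlb j)
    have hP : (∑ j, ∑ k, ((1/2)*(Φh j k - Φ0 j k)^2 + LPhi j k * |Φh j k|))
        + (1/2)*(∑ j, ∑ k, (Φ j k - Φh j k)^2)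
        ≤ ∑ j, ∑ k, ((1/2)*(Φ j k - Φ0 j k)^2 + LPhi j k * |Φ j k|) := by
      rw [e1 Φh hΦhsymm, e1 Φ hΦ, Finset.mul_sum, ← Finset.sum_add_distrib]
      apply Finset.sum_le_sum
      intro j _
      rw [Finset.mul_sum, ← Finset.sum_add_distrib]
      apply Finset.sum_le_sum
      intro k _
      have hl : (0:ℝ) ≤ (LPhi j k + LPhi k j)/2 := by
        have := hLPhi j k; have := hLPhi k j; linarith
      have := prox_key ((Φ0 j k + Φ0 k j)/2) ((LPhi j k + LPhi k j)/2) (Φ j k) hl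
      rw [← hΦh j k] at this
      linarith
    linarith
  have sqB : ∀ (b : Fin p → ℝ), (0:ℝ) ≤ ∑ j, (b j - bh j)^2 :=
    fun b => Finset.sum_nonneg (fun j _ => sq_nonneg _)
  have sqP : ∀ (Φ : Matrix (Fin p) (Fin p) ℝ),
      (0:ℝ) ≤ ∑ j, ∑ k, (Φ j k - Φh j k)^2 :=
    fun Φ => Finset.sum_nonneg (fun j _ => Finset.sum_nonneg (fun k _ => sq_nonneg _))
  refine ⟨hΦhsymm, ?_, ?_⟩
  · intro b Φ hΦ
    have := key b Φ hΦ
    have h1 := sqB b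
    have h2 := sqP Φ
    linarith
  · intro b Φ hΦ heq
    have hk := key b Φ hΦ
    rw [heq] at hk
    have h1 := sqB b
    have h2 := sqP Φ
    have hb0 : ∑ j, (b j - bh j)^2 = 0 := by linarith
    have hp0 : ∑ j, ∑ k, (Φ j k - Φh j k)^2 = 0 := by linarith
    constructor
    · funext j
      have := (Finset.sum_eq_zero_iff_of_nonneg (fun j _ => sq_nonneg (b j - bh j))).mp
        hb0 j (Finset.mem_univ j)
      have := sq_eq_zero_iff.mp this
      linarith
    · ext j k
      have hrow := (Finset.sum_eq_zero_iff_of_nonneg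
        (fun j _ => Finset.sum_nonneg (fun k _ => sq_nonneg (Φ j k - Φh j k)))).mp
        hp0 j (Finset.mem_univ j)
      have := (Finset.sum_eq_zero_iff_of_nonneg
        (fun k _ => sq_nonneg (Φ j k - Φh j k))).mp hrow k (Finset.mem_univ k)
      have := sq_eq_zero_iff.mp this
      linarith
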